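/- arXiv:math/0004014 — 2 statements merged into one kernel-verified Lean document; each statement's English description precedes it below -/
import Mathlib

section
/- In the Ariki–Koike algebra $\mathcal{H}_{q,\mathbf{Q}}(n)$, define $L_1 = T_0$ and $L_{i+1} = q^{-1} T_i L_i T_i$ for $1 \le i < n$. Then $L_i L_j = L_j L_i$ for all $1 \le i, j \le n$. -/
/-- Key word identity in a monoid. -/
theorem arikiKoike_key_word {M : Type*} [Monoid M] (a b l : M)
    (h1 : b * l = l * b) (h2 : b * a * b = a * b * a)
    (h3 : l * (a * l * a) = a * l * a * l) :
    a * l * a * (b * (a * l * a) * b) = b * (a * l * a) * b * (a * l * a) := by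
  have h1' : ∀ x : M, b * (l * x) = l * (b * x) := fun x => by
    simp only [← mul_assoc]; rw [h1]
  have h2' : ∀ x : M, b * (a * (b * x)) = a * (b * (a * x)) := fun x => by
    simp only [← mul_assoc]; rw [h2]
  have h2r : b * (a * b) = a * (b * a) := by
    simp only [← mul_assoc]; rw [h2]
  have h3l : l * a * l * a = a * l * a * l := by
    simp only [← mul_assoc] at h3; exact h3
  have h3' : ∀ x : M, l * (a * (l * (a * x))) = a * (l * (a * (l * x))) := fun x => by
    simp only [← mul_assoc]; rw [h3l]
  simp only [mul_assoc]
  conv_lhs => rw [← h2' (l * (a * b)), ← h1' (a * (b * (l * (a * b)))), h1' (a * b),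
    h2r, h3' (b * a)]
  conv_rhs => rw [← h2' (l * a), ← h1' (a * (b * (l * a))), h1' a,
    h2' (l * (a * (l * (b * a))))]

/-- in the Ariki–Koike algebra `ℋ_{q,Q}(n)`, the Jucys–Murphy
elements `L 1 = T 0`, `L (i+1) = q⁻¹ * T i * L i * T i` pairwise commute. -/
theorem arikiKoike_L_commute {R A : Type*} [CommRing R] [Ring A] [Algebra R A]
    (n r : ℕ) (q : Rˣ) (Q : Fin r → R) (T : ℕ → A)
    (hcyc : 0 < n → (List.ofFn (fun k : Fin r => T 0 - algebraMap R A (Q k))).prod = 0)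
    (hbr0 : 1 < n → T 0 * T 1 * T 0 * T 1 = T 1 * T 0 * T 1 * T 0)
    (hquad : ∀ i, 1 ≤ i → i < n → (T i + 1) * (T i - algebraMap R A (q : R)) = 0)
    (hbraid : ∀ i, 1 ≤ i → i + 1 < n → T (i + 1) * T i * T (i + 1) = T i * T (i + 1) * T i)
    (hcomm : ∀ i j, i + 1 < j → j < n → T i * T j = T j * T i)
    (L : ℕ → A) (hL1 : L 1 = T 0)
    (hLrec : ∀ i, 1 ≤ i → i < n → L (i + 1) = algebraMap R A ((q⁻¹ : Rˣ) : R) * (T i * L i * T i)) :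
    ∀ i j, 1 ≤ i → i ≤ n → 1 ≤ j → j ≤ n → L i * L j = L j * L i := by
  set u : A := algebraMap R A ((q⁻¹ : Rˣ) : R) with hu_def
  have hu : ∀ x : A, Commute u x := fun x => Algebra.commutes _ x
  have hcancel : ∀ x y : A, u * x = u * y → x = y := by
    intro x y h
    have hv : algebraMap R A ((q : Rˣ) : R) * u = 1 := by
      rw [hu_def, ← map_mul, Units.mul_inv, map_one]
    calc x = (algebraMap R A ((q : Rˣ) : R) * u) * x := by rw [hv, one_mul]
      _ = algebraMap R A ((q : Rˣ) : R) * (u * x) := by rw [mul_assoc]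
      _ = algebraMap R A ((q : Rˣ) : R) * (u * y) := by rw [h]
      _ = (algebraMap R A ((q : Rˣ) : R) * u) * y := by rw [mul_assoc]
      _ = y := by rw [hv, one_mul]
  -- (a) T k commutes with L i for 1 ≤ i < k < n
  have hA : ∀ k, k < n → ∀ i, 1 ≤ i → i < k → Commute (T k) (L i) := by
    intro k hk i
    induction i with
    | zero => intro h; exact absurd h (by omega)
    | succ m ih =>
      intro _ hik
      rcases Nat.eq_zero_or_pos m with hm | hm
      · subst hm
        rw [hL1]
        exact ((hcomm 0 k (by omega) hk) : Commute (T 0) (T k)).symm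
      · rw [hLrec m hm (by omega)]
        have h1 : Commute (T k) (T m) :=
          ((hcomm m k (by omega) hk) : Commute (T m) (T k)).symm
        have h2 : Commute (T k) (L m) := ih hm (by omega)
        exact (hu (T k)).symm.mul_right ((h1.mul_right h2).mul_right h1)
  -- (b) adjacent commutation
  have hB : ∀ i, 1 ≤ i → i + 1 ≤ n → Commute (L i) (L (i + 1)) := by
    intro i
    induction i with
    | zero => intro h; exact absurd h (by omega)
    | succ m ih =>
      intro _ h2n
      rcases Nat.eq_zero_or_pos m with hm | hm
      · subst hm
        rw [hLrec 1 le_rfl (by omega), hL1]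
        refine (hu (T 0)).symm.mul_right ?_
        show T 0 * (T 1 * T 0 * T 1) = T 1 * T 0 * T 1 * T 0
        simp only [← mul_assoc]
        exact hbr0 (by omega)
      · -- i = m + 1 with m ≥ 1
        have hrec1 : L (m + 1) = u * (T m * L m * T m) := hLrec m hm (by omega)
        have hrec2 : L (m + 2) = u * (T (m + 1) * L (m + 1) * T (m + 1)) :=
          hLrec (m + 1) (by omega) (by omega)
        have hIH : Commute (L m) (L (m + 1)) := ih hm (by omega)
        have h3 : Commute (L m) (T m * L m * T m) := by
          apply hcancel
          have h' : L m * (u * (T m * L m * T m)) = (u * (T m * L m * T m)) * L m := by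
            rw [← hrec1]; exact hIH
          calc u * (L m * (T m * L m * T m))
              = (u * L m) * (T m * L m * T m) := (mul_assoc _ _ _).symm
            _ = (L m * u) * (T m * L m * T m) := by rw [hu (L m)]
            _ = L m * (u * (T m * L m * T m)) := mul_assoc _ _ _
            _ = (u * (T m * L m * T m)) * L m := h'
            _ = u * (T m * L m * T m * L m) := mul_assoc _ _ _
        have hZ : T (m + 1) * (u * (T m * L m * T m)) * T (m + 1)
            = u * (T (m + 1) * (T m * L m * T m) * T (m + 1)) := by
          calc T (m + 1) * (u * (T m * L m * T m)) * T (m + 1)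
              = (T (m + 1) * u) * (T m * L m * T m) * T (m + 1) := by
                rw [← mul_assoc (T (m+1)) u (T m * L m * T m)]
            _ = (u * T (m + 1)) * (T m * L m * T m) * T (m + 1) := by rw [hu (T (m + 1))]
            _ = u * (T (m + 1) * (T m * L m * T m) * T (m + 1)) := by
                simp only [mul_assoc]
        have hkey : Commute (T m * L m * T m)
            (T (m + 1) * (T m * L m * T m) * T (m + 1)) :=
          arikiKoike_key_word (T m) (T (m + 1)) (L m)
            (hA (m + 1) (by omega) m hm (by omega)).eq
            (hbraid m hm (by omega)) h3.eq
        rw [hrec2, hrec1, hZ]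
        exact Commute.mul_left (hu _)
          ((hu _).symm.mul_right ((hu _).symm.mul_right hkey))
  -- general case i < j
  have hgen : ∀ j i, 1 ≤ i → i < j → j ≤ n → Commute (L i) (L j) := by
    intro j
    induction j with
    | zero => intro i _ h; exact absurd h (by omega)
    | succ m ih =>
      intro i hi hij hjn
      rcases eq_or_lt_of_le (Nat.lt_succ_iff.mp hij) with h | h
      · subst h; exact hB i hi hjn
      · rw [hLrec m (by omega) (by omega)]
        have hTm : Commute (L i) (T m) := (hA m (by omega) i hi h).symm
        have hLm : Commute (L i) (L m) := ih i hi h (by omega)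
        exact (hu (L i)).symm.mul_right ((hTm.mul_right hLm).mul_right hTm)
  intro i j hi hin hj hjn
  rcases lt_trichotomy i j with h | h | h
  · exact (hgen j i hi h hjn).eq
  · subst h; rfl
  · exact (hgen i j hj h hin).eq.symm
end

section
/- Fix $1 \le s < r$, $0 \le b \le n$, and a multipartition $\lambda$ of $n$ with $r$ components satisfying $|\lambda^{(1)}| + \dots + |\lambda^{(s)}| = b$. Let $\mathrm{Std}_{b,n-b}(\lambda)$ be the set of standard $\lambda$-tableaux in which $1,\dots,b$ appear in the first $s$ components and $b+1,\dots,n$ appear in the last $r-s$ components. Then $\mathrm{Std}(\lambda)$ is the disjoint union over distinguished right coset representatives $w$ of $\mathfrak{S}_b \times \mathfrak{S}_{n-b}$ in $\mathfrak{S}_n$ of the sets $\mathrm{Std}_{b,n-b}(\lambda)\,w$. -/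
/-- A partition, encoded as a weakly decreasing list of positive parts. -/
def IsPartitionList (l : List ℕ) : Prop :=
  l.Pairwise (· ≥ ·) ∧ ∀ x ∈ l, 0 < x

/-- A multipartition of `n` with `r` components: an `r`-tuple of partitions whose
sizes sum to `n`. -/
def IsMultipartition (n : ℕ) {r : ℕ} (lam : Fin r → List ℕ) : Prop :=
  (∀ k, IsPartitionList (lam k)) ∧ ∑ k, (lam k).sum = n

/-- The diagram of a multicomposition `lam`: nodes `(k, i, j)` (component `k`, row `i`,
column `j`, all 0-based) with `j < lam^{(k)}_i`. -/
def Nodes {r : ℕ} (lam : Fin r → List ℕ) : Set (Fin r × ℕ × ℕ) :=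
  {x | x.2.2 < (lam x.1).getD x.2.1 0}

/-- Standard `lam`-tableaux: bijective fillings of the diagram of `lam` by `{1,…,n}`
(encoded as functions vanishing off the diagram) whose rows and columns increase. -/
def StdTab (n : ℕ) {r : ℕ} (lam : Fin r → List ℕ) : Set (Fin r × ℕ × ℕ → ℕ) :=
  {f | Set.BijOn f (Nodes lam) (Set.Icc 1 n) ∧
       (∀ x, x ∉ Nodes lam → f x = 0) ∧
       (∀ k i j, (k, i, j + 1) ∈ Nodes lam → f (k, i, j) < f (k, i, j + 1)) ∧
       (∀ k i j, (k, i + 1, j) ∈ Nodes lam → f (k, i, j) < f (k, i + 1, j))}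

/-- Coxeter length of `w ∈ 𝔖_n`: the number of inversions. -/
def len (n : ℕ) (w : Equiv.Perm ℕ) : ℕ :=
  (((Finset.Icc 1 n) ×ˢ (Finset.Icc 1 n)).filter
    (fun p => p.1 < p.2 ∧ w p.2 < w p.1)).card

/-- Membership in the Young subgroup `𝔖_{(b, n-b)} = 𝔖_b × 𝔖_{n-b}` of `𝔖_n`. -/
def InYoung (n b : ℕ) (u : Equiv.Perm ℕ) : Prop :=
  (∀ i, i ∉ Set.Icc 1 n → u i = i) ∧ (∀ i, 1 ≤ i → i ≤ b → u i ≤ b)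

/-- `w` is a distinguished (minimal length in its coset) right coset representative
of `𝔖_{(b, n-b)}` in `𝔖_n`.  (With the paper's right-action convention, the paper
product `u·w` is `w * u` in Lean.) -/
def IsDistinguished (n b : ℕ) (w : Equiv.Perm ℕ) : Prop :=
  (∀ i, i ∉ Set.Icc 1 n → w i = i) ∧ ∀ u, InYoung n b u → len n w ≤ len n (w * u)

/-- The standard `lam`-tableaux in `Std_{b,n-b}(lam)`: entries `1,…,b` lie in the
first `s` components and entries `b+1,…,n` lie in the last components. -/
def StdBN (n s b : ℕ) {r : ℕ} (lam : Fin r → List ℕ) : Set (Fin r × ℕ × ℕ → ℕ) :=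
  {f | f ∈ StdTab n lam ∧ ∀ x ∈ Nodes lam, (f x ≤ b ↔ (x.1 : ℕ) < s)}

/-! A permutation `w` of `{1, …, n}` is a distinguished representative exactly when it is
increasing on `{1, …, b}` and on `{b + 1, …, n}`. For such `w` every inversion crosses the two
blocks, and right multiplication by `𝔖_b × 𝔖_{n-b}` only permutes the crossing inversions, so `w`
has minimal length in its coset; conversely a descent inside a block is removed by an adjacent
transposition lying in `𝔖_b × 𝔖_{n-b}`, which lowers the length. A block-increasing `w` is
determined by the set `w {1, …, b}`, and every `b`-subset of `{1, …, n}` arises.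

Given a standard tableau `f`, let `A` be the set of its entries in the first `s` components, of
size `b`, and `w` the representative with `w {1, …, b} = A`. Then `w⁻¹ ∘ f ∈ Std_{b,n-b}(λ)`,
since `w⁻¹` is increasing on `A` and on its complement; conversely `w ∘ g` is standard for every
`g ∈ Std_{b,n-b}(λ)`. The cosets are disjoint because `A` is read off `w ∘ g` as its set of
entries in the first `s` components. -/

open Set

namespace Equiv.Perm

variable {α : Type*}

theorem bijOn_of_forall_notMem_eq {w : Perm α} {s : Set α} (hw : ∀ x ∉ s, w x = x) :
    BijOn w s s := by
  have hcompl : w '' sᶜ = sᶜ := EqOn.image_eq_self fun x hx => hw x hx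
  rw [image_compl_eq w.bijective, compl_inj_iff] at hcompl
  simpa only [hcompl] using w.injective.injOn.bijOn_image (s := s)

theorem exists_coe_eq_of_image_eq {f : α → α} {s : Set α} (hs : s.Finite)
    (himage : f '' s = s) (hf : ∀ x ∉ s, f x = x) : ∃ w : Perm α, ⇑w = f := by
  have hbij : BijOn f s s :=
    (hs.surjOn_iff_bijOn_of_mapsTo fun x hx => himage ▸ mem_image_of_mem f hx).1 himage.ge
  refine ⟨Equiv.ofBijective f ⟨fun x y hxy => ?_, fun y => ?_⟩, rfl⟩
  · by_cases hx : x ∈ s <;> by_cases hy : y ∈ s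
    · exact hbij.injOn hx hy hxy
    · exact absurd (hxy ▸ hbij.mapsTo hx) (by rwa [hf y hy])
    · exact absurd (hxy ▸ hbij.mapsTo hy) (by rwa [hf x hx])
    · rwa [hf x hx, hf y hy] at hxy
  · by_cases hy : y ∈ s
    · obtain ⟨x, -, hx⟩ := hbij.surjOn hy
      exact ⟨x, hx⟩
    · exact ⟨y, hf y hy⟩

theorem strictMonoOn_symm_image [LinearOrder α] {w : Perm α} {s : Set α}
    (hw : StrictMonoOn w s) : StrictMonoOn w.symm (w '' s) := by
  rintro _ ⟨a, ha, rfl⟩ _ ⟨a', ha', rfl⟩ h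
  simpa using (hw.lt_iff_lt ha ha').1 h

end Equiv.Perm

theorem StrictMonoOn.eqOn_of_image_eq {α β : Type*} [LinearOrder α] [WellFoundedLT α]
    [Preorder β] {f g : α → β} {s : Set α} (hf : StrictMonoOn f s) (hg : StrictMonoOn g s)
    (h : f '' s = g '' s) : EqOn f g s := by
  rw [strictMonoOn_iff_strictMono] at hf hg
  have := (hf.range_inj hg).1 (by simpa only [← image_eq_range] using h)
  exact fun x hx => congrFun this ⟨x, hx⟩

theorem Finset.exists_strictMonoOn_image_eq {α β : Type*} [LinearOrder α] [LinearOrder β]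
    [Nonempty β] (s : Finset α) (t : Finset β) (h : s.card = t.card) :
    ∃ f : α → β, StrictMonoOn f s ∧ f '' s = t := by
  classical
  let e : s ≃o t := (s.orderIsoOfFin rfl).symm.trans (t.orderIsoOfFin h.symm)
  let f : α → β := fun a => if ha : a ∈ s then e ⟨a, ha⟩ else Classical.arbitrary β
  have hf (a : α) (ha : a ∈ s) : f a = e ⟨a, ha⟩ := dif_pos ha
  refine ⟨f, fun a ha a' ha' hlt => ?_, ?_⟩
  · rw [hf a ha, hf a' ha']
    exact e.strictMono hlt
  refine Set.Subset.antisymm ?_ fun y hy => ?_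
  · rintro _ ⟨a, ha, rfl⟩
    simp [hf a ha]
  · exact ⟨e.symm ⟨y, hy⟩, (e.symm ⟨y, hy⟩).2, by simp [hf _ (e.symm ⟨y, hy⟩).2]⟩

theorem Finset.card_biUnion_singleton_product {α β : Type*} [DecidableEq α] [DecidableEq β]
    (s : Finset α) (t : α → Finset β) :
    (s.biUnion fun a => {a} ×ˢ t a).card = ∑ a ∈ s, (t a).card := by
  rw [Finset.card_biUnion fun a _ a' _ h => Finset.disjoint_left.2 fun p hp hp' => h ?_]
  · simp
  · simp only [Finset.mem_product, Finset.mem_singleton] at hp hp'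
    rw [← hp.1, hp'.1]

theorem List.getD_succ_le_getD {l : List ℕ} (hl : l.Pairwise (· ≥ ·)) (i : ℕ) :
    l.getD (i + 1) 0 ≤ l.getD i 0 := by
  by_cases hi : i + 1 < l.length
  · rw [List.getD_eq_getElem _ _ hi, List.getD_eq_getElem _ _ (by omega)]
    exact List.pairwise_iff_getElem.1 hl i (i + 1) (by omega) hi (by omega)
  · rw [List.getD_eq_default _ _ (by omega)]
    exact Nat.zero_le _

theorem List.sum_range_getD (l : List ℕ) : ∑ i ∈ Finset.range l.length, l.getD i 0 = l.sum := by
  rw [Finset.sum_range, ← Fin.sum_univ_getElem]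
  simp

theorem Nat.Icc_succ_eq_Icc_one_sdiff (b n : ℕ) : Icc (b + 1) n = Icc 1 n \ Icc 1 b := by
  ext m
  simp only [mem_Icc, mem_sdiff]
  omega

theorem Nat.Icc_one_eq_union_Icc_succ {b n : ℕ} (hb : b ≤ n) :
    Icc 1 n = Icc 1 b ∪ Icc (b + 1) n := by
  ext m
  simp only [mem_union, mem_Icc]
  omega

theorem Nat.swap_add_one_lt_swap_add_one {i p q : ℕ} (hpq : p < q) (hne : (p, q) ≠ (i, i + 1)) :
    Equiv.swap i (i + 1) p < Equiv.swap i (i + 1) q := by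
  simp only [ne_eq, Prod.mk.injEq] at hne
  simp only [Equiv.swap_apply_def]
  split_ifs <;> omega

theorem Equiv.Perm.image_Icc_succ_eq_sdiff {n b : ℕ} {w : Perm ℕ}
    (hw : ∀ i ∉ Icc 1 n, w i = i) : w '' Icc (b + 1) n = Icc 1 n \ w '' Icc 1 b := by
  rw [Nat.Icc_succ_eq_Icc_one_sdiff, image_sdiff w.injective,
    (bijOn_of_forall_notMem_eq hw).image_eq]

section Young

variable {n b : ℕ}

theorem InYoung.image_Icc_one {u : Equiv.Perm ℕ} (hu : InYoung n b u) :
    u '' Icc 1 b = Icc 1 b := by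
  have hu₀ : u 0 = 0 := hu.1 0 (by simp)
  have hmaps : MapsTo u (Icc 1 b) (Icc 1 b) := fun i hi =>
    ⟨Nat.one_le_iff_ne_zero.2 fun h =>
        Nat.one_le_iff_ne_zero.1 hi.1 (u.injective (h.trans hu₀.symm)),
      hu.2 i hi.1 hi.2⟩
  exact ((finite_Icc 1 b).injOn_iff_bijOn_of_mapsTo hmaps).1 u.injective.injOn |>.image_eq

theorem InYoung.image_Icc_succ {u : Equiv.Perm ℕ} (hu : InYoung n b u) :
    u '' Icc (b + 1) n = Icc (b + 1) n := by
  rw [Equiv.Perm.image_Icc_succ_eq_sdiff hu.1, hu.image_Icc_one, ← Nat.Icc_succ_eq_Icc_one_sdiff]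

theorem inYoung_swap {i : ℕ} (hi : 1 ≤ i) (hin : i + 1 ≤ n) (hib : i + 1 ≤ b ∨ b < i) :
    InYoung n b (Equiv.swap i (i + 1)) := by
  refine ⟨fun m hm => ?_, fun m _ hmb => ?_⟩ <;> rw [Equiv.swap_apply_def]
  · rw [mem_Icc] at hm
    split_ifs <;> omega
  · split_ifs <;> omega

def crossInversions (n b : ℕ) (v : Equiv.Perm ℕ) : Finset (ℕ × ℕ) :=
  (Finset.Icc 1 b ×ˢ Finset.Icc (b + 1) n).filter fun p => v p.2 < v p.1

theorem card_crossInversions_le_len (v : Equiv.Perm ℕ) :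
    (crossInversions n b v).card ≤ len n v := by
  refine Finset.card_le_card fun p hp => ?_
  simp only [crossInversions, Finset.mem_filter, Finset.mem_product, Finset.mem_Icc] at hp ⊢
  omega

theorem len_eq_card_crossInversions {v : Equiv.Perm ℕ} (h₁ : StrictMonoOn v (Icc 1 b))
    (h₂ : StrictMonoOn v (Icc (b + 1) n)) : len n v = (crossInversions n b v).card := by
  unfold len crossInversions
  congr 1
  ext ⟨p, q⟩
  simp only [Finset.mem_filter, Finset.mem_product, Finset.mem_Icc]
  constructor
  · rintro ⟨⟨⟨hp1, hpn⟩, hq1, hqn⟩, hpq, hinv⟩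
    have hpb : p ≤ b := by
      by_contra
      exact (h₂ ⟨by omega, hpn⟩ ⟨by omega, hqn⟩ hpq).not_gt hinv
    have hqb : b < q := by
      by_contra
      exact (h₁ ⟨hp1, hpb⟩ ⟨by omega, by omega⟩ hpq).not_gt hinv
    exact ⟨⟨⟨hp1, hpb⟩, hqb, hqn⟩, hinv⟩
  · rintro ⟨⟨⟨hp1, hpb⟩, hqb, hqn⟩, hinv⟩
    exact ⟨⟨⟨hp1, by omega⟩, by omega, hqn⟩, by omega, hinv⟩

theorem card_crossInversions_mul {u : Equiv.Perm ℕ} (hu : InYoung n b u) (v : Equiv.Perm ℕ) :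
    (crossInversions n b (v * u)).card = (crossInversions n b v).card := by
  have h₁ (x : ℕ) : u x ∈ Icc 1 b ↔ x ∈ Icc 1 b := by
    conv_lhs => rw [← hu.image_Icc_one]
    exact u.injective.mem_set_image
  have h₂ (x : ℕ) : u x ∈ Icc (b + 1) n ↔ x ∈ Icc (b + 1) n := by
    conv_lhs => rw [← hu.image_Icc_succ]
    exact u.injective.mem_set_image
  refine Finset.card_nbij' (Prod.map u u) (Prod.map u.symm u.symm) ?_ ?_
    (fun _ _ => Prod.ext (u.symm_apply_apply _) (u.symm_apply_apply _))
    (fun _ _ => Prod.ext (u.apply_symm_apply _) (u.apply_symm_apply _))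
  all_goals
    rintro ⟨p, q⟩ hpq
    simp only [Finset.mem_coe, crossInversions, Finset.mem_filter, Finset.mem_product,
      Prod.map, Finset.mem_Icc] at hpq ⊢
    simp only [Equiv.Perm.mul_apply] at hpq ⊢
  · exact ⟨⟨(h₁ p).2 hpq.1.1, (h₂ q).2 hpq.1.2⟩, hpq.2⟩
  · simp only [Equiv.apply_symm_apply]
    exact ⟨⟨(h₁ (u.symm p)).1 (by simpa using hpq.1.1),
      (h₂ (u.symm q)).1 (by simpa using hpq.1.2)⟩, hpq.2⟩

/-- `swap i (i + 1)` maps the inversions of `w * swap i (i + 1)` injectively into those of `w`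
other than `(i, i + 1)`. -/
theorem len_mul_swap_lt {w : Equiv.Perm ℕ} {i : ℕ} (hi : 1 ≤ i) (hin : i + 1 ≤ n)
    (hdesc : w (i + 1) < w i) : len n (w * Equiv.swap i (i + 1)) < len n w := by
  set τ := Equiv.swap i (i + 1)
  have hτ : MapsTo τ (Icc 1 n) (Icc 1 n) := fun m hm => by
    simp only [τ, Equiv.swap_apply_def, mem_Icc] at hm ⊢
    split_ifs <;> omega
  set inv := ((Finset.Icc 1 n) ×ˢ (Finset.Icc 1 n)).filter fun p => p.1 < p.2 ∧ w p.2 < w p.1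
  have hdescent : (i, i + 1) ∈ inv := by
    simp only [inv, Finset.mem_filter, Finset.mem_product, Finset.mem_Icc]
    exact ⟨⟨⟨hi, by omega⟩, by omega, hin⟩, by omega, hdesc⟩
  calc len n (w * τ) ≤ (inv.erase (i, i + 1)).card := by
        refine Finset.card_le_card_of_injOn (Prod.map τ τ) (fun ⟨p, q⟩ hpq => ?_)
          (Prod.map_injective.2 ⟨τ.injective, τ.injective⟩).injOn
        simp only [Finset.mem_coe, Finset.mem_filter, Finset.mem_product, Finset.mem_Icc] at hpq
        simp only [Equiv.Perm.mul_apply] at hpq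
        have hne : (p, q) ≠ (i, i + 1) := by
          rintro ⟨⟩
          simp only [τ, Equiv.swap_apply_left, Equiv.swap_apply_right] at hpq
          omega
        simp only [inv, Finset.coe_erase, Finset.coe_filter, Finset.mem_product,
          Finset.mem_Icc, mem_sdiff, mem_ofPred_eq, mem_singleton_iff, Prod.map]
        refine ⟨⟨⟨hτ hpq.1.1, hτ hpq.1.2⟩, Nat.swap_add_one_lt_swap_add_one hpq.2.1 hne,
          hpq.2.2⟩, ?_⟩
        rw [Prod.mk.injEq, ← τ.injective.eq_iff (b := i), ← τ.injective.eq_iff (b := i + 1)]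
        simp only [τ, Equiv.swap_apply_self, Equiv.swap_apply_left, Equiv.swap_apply_right]
        omega
    _ < inv.card := Finset.card_erase_lt_of_mem hdescent

end Young

section Distinguished

variable {n b : ℕ}

theorem isDistinguished_of_strictMonoOn {w : Equiv.Perm ℕ} (hw : ∀ i ∉ Icc 1 n, w i = i)
    (h₁ : StrictMonoOn w (Icc 1 b)) (h₂ : StrictMonoOn w (Icc (b + 1) n)) :
    IsDistinguished n b w := by
  refine ⟨hw, fun u hu => ?_⟩
  rw [len_eq_card_crossInversions h₁ h₂, ← card_crossInversions_mul hu]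
  exact card_crossInversions_le_len _

theorem IsDistinguished.strictMonoOn (hb : b ≤ n) {w : Equiv.Perm ℕ}
    (hw : IsDistinguished n b w) :
    StrictMonoOn w (Icc 1 b) ∧ StrictMonoOn w (Icc (b + 1) n) := by
  have hasc : ∀ i, 1 ≤ i → i + 1 ≤ n → (i + 1 ≤ b ∨ b < i) → w i < w (i + 1) := by
    intro i hi hin hib
    refine lt_of_le_of_ne (not_lt.1 fun hdesc => ?_) (w.injective.ne (by omega))
    exact (hw.2 _ (inYoung_swap hi hin hib)).not_gt (len_mul_swap_lt hi hin hdesc)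
  constructor <;> refine strictMonoOn_of_lt_add_one ordConnected_Icc fun i _ hi hi' => ?_
  · exact hasc i hi.1 (hi'.2.trans hb) (Or.inl hi'.2)
  · exact hasc i (Nat.zero_lt_of_lt hi.1) hi'.2 (Or.inr hi.1)

theorem isDistinguished_iff (hb : b ≤ n) {w : Equiv.Perm ℕ} :
    IsDistinguished n b w ↔
      (∀ i ∉ Icc 1 n, w i = i) ∧ StrictMonoOn w (Icc 1 b) ∧ StrictMonoOn w (Icc (b + 1) n) :=
  ⟨fun hw => ⟨hw.1, hw.strictMonoOn hb⟩,
    fun ⟨hw, h₁, h₂⟩ => isDistinguished_of_strictMonoOn hw h₁ h₂⟩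

theorem IsDistinguished.eq_of_image_eq (hb : b ≤ n) {w w' : Equiv.Perm ℕ}
    (hw : IsDistinguished n b w) (hw' : IsDistinguished n b w')
    (h : w '' Icc 1 b = w' '' Icc 1 b) : w = w' := by
  obtain ⟨hw₀, hw₁, hw₂⟩ := (isDistinguished_iff hb).1 hw
  obtain ⟨hw'₀, hw'₁, hw'₂⟩ := (isDistinguished_iff hb).1 hw'
  have e₁ := hw₁.eqOn_of_image_eq hw'₁ h
  have e₂ := hw₂.eqOn_of_image_eq hw'₂ (by
    rw [Equiv.Perm.image_Icc_succ_eq_sdiff hw₀, Equiv.Perm.image_Icc_succ_eq_sdiff hw'₀, h])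
  ext m
  by_cases h₁ : m ∈ Icc 1 b
  · exact e₁ h₁
  by_cases h₂ : m ∈ Icc (b + 1) n
  · exact e₂ h₂
  have hm : m ∉ Icc 1 n := by simp only [mem_Icc] at *; omega
  rw [hw₀ m hm, hw'₀ m hm]

/-- The representative sends `1, …, b` increasingly onto `A` and `b + 1, …, n` increasingly onto
the complement of `A` in `{1, …, n}`. -/
theorem exists_isDistinguished_image_eq (A : Finset ℕ) (hA : A ⊆ Finset.Icc 1 n)
    (hcard : A.card = b) : ∃ w, IsDistinguished n b w ∧ w '' Icc 1 b = A := by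
  classical
  have hbn : b ≤ n := by simpa [hcard] using Finset.card_le_card hA
  obtain ⟨f₁, hf₁, himage₁⟩ := (Finset.Icc 1 b).exists_strictMonoOn_image_eq A (by simp [hcard])
  obtain ⟨f₂, hf₂, himage₂⟩ := (Finset.Icc (b + 1) n).exists_strictMonoOn_image_eq
    (Finset.Icc 1 n \ A) (by simp [Finset.card_sdiff_of_subset hA, hcard])
  simp only [Finset.coe_Icc, Finset.coe_sdiff] at hf₁ himage₁ hf₂ himage₂
  let φ := (Icc 1 b).piecewise f₁ ((Icc (b + 1) n).piecewise f₂ id)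
  have hφ₁ : EqOn φ f₁ (Icc 1 b) := fun m hm => piecewise_eq_of_mem _ _ _ hm
  have hφ₂ : EqOn φ f₂ (Icc (b + 1) n) := fun m hm => by
    have : m ∉ Icc 1 b := by simp only [mem_Icc] at *; omega
    simp only [φ, piecewise_eq_of_notMem _ _ _ this, piecewise_eq_of_mem _ _ _ hm]
  have hφ₀ (m : ℕ) (hm : m ∉ Icc 1 n) : φ m = m := by
    simp only [mem_Icc] at hm
    simp only [φ, piecewise, mem_Icc]
    rw [if_neg (by omega), if_neg (by omega), id]
  have himage : φ '' Icc 1 n = Icc 1 n := by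
    conv_lhs => rw [Nat.Icc_one_eq_union_Icc_succ hbn]
    rw [image_union, hφ₁.image_eq, hφ₂.image_eq, himage₁, himage₂,
      union_sdiff_cancel (by simpa using Finset.coe_subset.2 hA)]
  obtain ⟨w, hw⟩ := Equiv.Perm.exists_coe_eq_of_image_eq (finite_Icc 1 n) himage hφ₀
  rw [← hw] at hφ₀ hφ₁ hφ₂
  exact ⟨w, isDistinguished_of_strictMonoOn hφ₀ (hf₁.congr hφ₁.symm) (hf₂.congr hφ₂.symm),
    hφ₁.image_eq.trans himage₁⟩

end Distinguished

section Tableaux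

variable {n r s b : ℕ} {lam : Fin r → List ℕ}

theorem mem_Nodes_of_succ_col {k : Fin r} {i j : ℕ} (h : (k, i, j + 1) ∈ Nodes lam) :
    (k, i, j) ∈ Nodes lam :=
  Nat.lt_of_succ_lt h

theorem mem_Nodes_of_succ_row {k : Fin r} (hk : (lam k).Pairwise (· ≥ ·)) {i j : ℕ}
    (h : (k, i + 1, j) ∈ Nodes lam) : (k, i, j) ∈ Nodes lam :=
  lt_of_lt_of_le h (List.getD_succ_le_getD hk i)

def lowNodes (lam : Fin r → List ℕ) (s : ℕ) : Set (Fin r × ℕ × ℕ) :=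
  {x ∈ Nodes lam | (x.1 : ℕ) < s}

theorem lowNodes_subset_Nodes : lowNodes lam s ⊆ Nodes lam :=
  sep_subset _ _

def lowNodesFinset (lam : Fin r → List ℕ) (s : ℕ) : Finset (Fin r × ℕ × ℕ) :=
  (Finset.univ.filter fun k : Fin r => (k : ℕ) < s).biUnion fun k =>
    {k} ×ˢ (Finset.range (lam k).length).biUnion fun i => {i} ×ˢ Finset.range ((lam k).getD i 0)

theorem coe_lowNodesFinset : (lowNodesFinset lam s : Set (Fin r × ℕ × ℕ)) = lowNodes lam s := by
  ext ⟨k, i, j⟩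
  simp only [lowNodesFinset, lowNodes, Finset.coe_biUnion, Finset.coe_product,
    Finset.coe_singleton, Finset.coe_range, Finset.coe_filter, Finset.mem_univ, true_and,
    mem_iUnion, mem_prod, mem_singleton_iff, mem_Iio, exists_prop]
  constructor
  · rintro ⟨k, hk, rfl, i, -, rfl, hj⟩
    exact ⟨hj, hk⟩
  · rintro ⟨hj, hk⟩
    refine ⟨k, hk, rfl, i, ?_, rfl, hj⟩
    by_contra hi
    change j < (lam k).getD i 0 at hj
    rw [List.getD_eq_default _ _ (by omega)] at hj
    omega

theorem card_lowNodesFinset :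
    (lowNodesFinset lam s).card =
      ∑ k ∈ Finset.univ.filter (fun k : Fin r => (k : ℕ) < s), (lam k).sum := by
  simp only [lowNodesFinset, Finset.card_biUnion_singleton_product, Finset.card_range,
    List.sum_range_getD]

theorem comp_mem_StdTab (hlam : ∀ k, (lam k).Pairwise (· ≥ ·)) {g : Fin r × ℕ × ℕ → ℕ}
    (hg : g ∈ StdTab n lam) {w : ℕ → ℕ} (hw : BijOn w (Icc 1 n) (Icc 1 n)) (hw₀ : w 0 = 0)
    (hmono : ∀ x ∈ Nodes lam, ∀ y ∈ Nodes lam, x.1 = y.1 → g x < g y → w (g x) < w (g y)) :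
    w ∘ g ∈ StdTab n lam := by
  obtain ⟨hbij, hzero, hrow, hcol⟩ := hg
  exact ⟨hw.comp hbij, fun x hx => by simp [hzero x hx, hw₀],
    fun k i j h => hmono _ (mem_Nodes_of_succ_col h) _ h rfl (hrow k i j h),
    fun k i j h => hmono _ (mem_Nodes_of_succ_row (hlam k) h) _ h rfl (hcol k i j h)⟩

theorem image_lowNodes_of_mem_StdBN (hb : b ≤ n) {g : Fin r × ℕ × ℕ → ℕ}
    (hg : g ∈ StdBN n s b lam) : g '' lowNodes lam s = Icc 1 b := by
  refine Set.Subset.antisymm ?_ fun m hm => ?_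
  · rintro _ ⟨x, ⟨hx, hs⟩, rfl⟩
    exact ⟨(hg.1.1.mapsTo hx).1, (hg.2 x hx).2 hs⟩
  · obtain ⟨x, hx, rfl⟩ := hg.1.1.surjOn ⟨hm.1, hm.2.trans hb⟩
    exact ⟨x, ⟨hx, (hg.2 x hx).1 hm.2⟩, rfl⟩

theorem comp_mem_StdTab_of_mem_StdBN (hlam : ∀ k, (lam k).Pairwise (· ≥ ·)) (hb : b ≤ n)
    {g : Fin r × ℕ × ℕ → ℕ} (hg : g ∈ StdBN n s b lam) {w : Equiv.Perm ℕ}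
    (hw : IsDistinguished n b w) : ⇑w ∘ g ∈ StdTab n lam := by
  obtain ⟨hw₀, hw₁, hw₂⟩ := (isDistinguished_iff hb).1 hw
  refine comp_mem_StdTab hlam hg.1 (Equiv.Perm.bijOn_of_forall_notMem_eq hw₀) (hw₀ 0 (by simp))
    fun x hx y hy hxy hlt => ?_
  have hgx := hg.1.1.mapsTo hx
  have hgy := hg.1.1.mapsTo hy
  by_cases hs : (x.1 : ℕ) < s
  · exact hw₁ ⟨hgx.1, (hg.2 x hx).2 hs⟩ ⟨hgy.1, (hg.2 y hy).2 (hxy ▸ hs)⟩ hlt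
  · exact hw₂ ⟨not_le.1 ((hg.2 x hx).not.2 hs), hgx.2⟩
      ⟨not_le.1 ((hg.2 y hy).not.2 (hxy ▸ hs)), hgy.2⟩ hlt

theorem exists_finset_coe_eq_image_lowNodes {f : Fin r × ℕ × ℕ → ℕ} (hf : f ∈ StdTab n lam)
    (hlb : ∑ k ∈ Finset.univ.filter (fun k : Fin r => (k : ℕ) < s), (lam k).sum = b) :
    ∃ A : Finset ℕ, A ⊆ Finset.Icc 1 n ∧ A.card = b ∧ (A : Set ℕ) = f '' lowNodes lam s := by
  classical
  refine ⟨(lowNodesFinset lam s).image f, ?_, ?_, by simp [coe_lowNodesFinset]⟩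
  · rw [← Finset.coe_subset, Finset.coe_image, coe_lowNodesFinset, Finset.coe_Icc]
    exact (hf.1.mapsTo.mono_left lowNodes_subset_Nodes).image_subset
  · rw [Finset.card_image_of_injOn (coe_lowNodesFinset ▸ hf.1.injOn.mono lowNodes_subset_Nodes),
      card_lowNodesFinset, hlb]

theorem exists_isDistinguished_comp_eq (hlam : ∀ k, (lam k).Pairwise (· ≥ ·))
    {f : Fin r × ℕ × ℕ → ℕ} (hf : f ∈ StdTab n lam)
    (hlb : ∑ k ∈ Finset.univ.filter (fun k : Fin r => (k : ℕ) < s), (lam k).sum = b) :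
    ∃ w, IsDistinguished n b w ∧ ∃ g ∈ StdBN n s b lam, ⇑w ∘ g = f := by
  obtain ⟨A, hA, hcard, hAf⟩ := exists_finset_coe_eq_image_lowNodes hf hlb
  have hb : b ≤ n := by simpa [hcard] using Finset.card_le_card hA
  obtain ⟨w, hw, himage⟩ := exists_isDistinguished_image_eq A hA hcard
  obtain ⟨hw₀, hw₁, hw₂⟩ := (isDistinguished_iff hb).1 hw
  have hlow (x) (hx : x ∈ Nodes lam) : f x ∈ w '' Icc 1 b ↔ (x.1 : ℕ) < s := by
    rw [himage, hAf, hf.1.injOn.mem_image_iff lowNodes_subset_Nodes hx]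
    exact and_iff_right hx
  have hhigh (x) (hx : x ∈ Nodes lam) (hs : ¬(x.1 : ℕ) < s) : f x ∈ w '' Icc (b + 1) n := by
    rw [Equiv.Perm.image_Icc_succ_eq_sdiff hw₀]
    exact ⟨hf.1.mapsTo hx, (hlow x hx).not.2 hs⟩
  have hw₀' : ∀ i ∉ Icc 1 n, w.symm i = i := fun i hi => w.symm_apply_eq.2 (hw₀ i hi).symm
  have hbij' := Equiv.Perm.bijOn_of_forall_notMem_eq hw₀'
  refine ⟨w, hw, w.symm ∘ f, ⟨comp_mem_StdTab hlam hf hbij' (hw₀' 0 (by simp))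
    fun x hx y hy hxy hlt => ?_, fun x hx => ?_⟩, by ext; simp⟩
  · by_cases hs : (x.1 : ℕ) < s
    · exact Equiv.Perm.strictMonoOn_symm_image hw₁ ((hlow x hx).2 hs)
        ((hlow y hy).2 (hxy ▸ hs)) hlt
    · exact Equiv.Perm.strictMonoOn_symm_image hw₂ (hhigh x hx hs) (hhigh y hy (hxy ▸ hs)) hlt
  · rw [Function.comp_apply, ← hlow x hx, mem_image_equiv, mem_Icc]
    exact ⟨fun h => ⟨(hbij'.mapsTo (hf.1.mapsTo hx)).1, h⟩, And.right⟩

end Tableaux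

theorem std_disjoint_union_cosets_general (n r s b : ℕ) (hb : b ≤ n)
    (lam : Fin r → List ℕ) (hlam : IsMultipartition n lam)
    (hlb : ∑ k ∈ Finset.univ.filter (fun k : Fin r => (k : ℕ) < s), (lam k).sum = b) :
    (StdTab n lam =
      ⋃ w ∈ {w : Equiv.Perm ℕ | IsDistinguished n b w},
        (fun f => ⇑w ∘ f) '' StdBN n s b lam) ∧
    (∀ w w' : Equiv.Perm ℕ, IsDistinguished n b w → IsDistinguished n b w' → w ≠ w' →
      Disjoint ((fun f => ⇑w ∘ f) '' StdBN n s b lam)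
        ((fun f => ⇑w' ∘ f) '' StdBN n s b lam)) := by
  have hsorted : ∀ k, (lam k).Pairwise (· ≥ ·) := fun k => (hlam.1 k).1
  refine ⟨Set.Subset.antisymm (fun f hf => ?_) ?_, fun w w' hw hw' hne => ?_⟩
  · obtain ⟨w, hw, g, hg, rfl⟩ := exists_isDistinguished_comp_eq hsorted hf hlb
    exact mem_biUnion hw ⟨g, hg, rfl⟩
  · exact iUnion₂_subset fun w hw =>
      image_subset_iff.2 fun g hg => comp_mem_StdTab_of_mem_StdBN hsorted hb hg hw
  · refine disjoint_left.2 ?_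
    rintro _ ⟨g, hg, rfl⟩ ⟨g', hg', heq⟩
    have himage := congrArg (· '' lowNodes lam s) heq
    simp only [image_comp, image_lowNodes_of_mem_StdBN hb hg,
      image_lowNodes_of_mem_StdBN hb hg'] at himage
    exact hne (hw.eq_of_image_eq hb hw' himage.symm)

/-- for a multipartition `lam` of `n` with `|lam^{(1)}|+⋯+|lam^{(s)}| = b`,
the set `Std(lam)` is the disjoint union, over distinguished right coset
representatives `w` of `𝔖_b × 𝔖_{n-b}` in `𝔖_n`, of the sets `Std_{b,n-b}(lam)·w`
(the right action of `w` on a tableau replaces each entry `m` by `m·w`, i.e. `w m`). -/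
theorem std_disjoint_union_cosets (n r s b : ℕ) (hs1 : 1 ≤ s) (hsr : s < r) (hb : b ≤ n)
    (lam : Fin r → List ℕ) (hlam : IsMultipartition n lam)
    (hlb : ∑ k ∈ Finset.univ.filter (fun k : Fin r => (k : ℕ) < s), (lam k).sum = b) :
    (StdTab n lam =
      ⋃ w ∈ {w : Equiv.Perm ℕ | IsDistinguished n b w},
        (fun f => ⇑w ∘ f) '' StdBN n s b lam) ∧
    (∀ w w' : Equiv.Perm ℕ, IsDistinguished n b w → IsDistinguished n b w' → w ≠ w' →
      Disjoint ((fun f => ⇑w ∘ f) '' StdBN n s b lam)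
        ((fun f => ⇑w' ∘ f) '' StdBN n s b lam)) :=
  std_disjoint_union_cosets_general n r s b hb lam hlam hlb
end
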